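/- arXiv:1810.07797 — 4 statements merged into one kernel-verified Lean document; each statement's English description precedes it below -/
import Mathlib

section
/- Let K ≥ 1 and 0 < M ≤ K be given with M < K, let λ ≥ 0, and define Z(α, λ) = (1 - M/K) · e^{-α λ M/K} for α ∈ [0,1]. For r > 1 set ΔZ(r, α, λ) = Z(α, λ) - Z(min(rα, 1), λ). Then sup over α ∈ [0,1] and λ ≥ 0 of ΔZ(r, α, λ) equals (1 - M/K) · (e^{-ln r/(r-1)} - e^{-r ln r/(r-1)}), and it is attained at α = 1/r and λ = r ln r / ((r-1) M/K). -/
/-!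
With `x = α λ M/K`, replacing `min (rα) 1` by `rα` only lowers the second exponential, so
`ΔZ ≤ (1 - M/K) (e^{-x} - e^{-rx})`. Put `x* = ln r/(r-1)`, so that `e^{-r x*} = e^{-x*}/r`; with
`y = x* - x` the bound `e^{-x} - e^{-rx} ≤ e^{-x*} - e^{-r x*}` becomes Bernoulli's inequality
`e^{ry} ≥ 1 + r(e^y - 1)`. Equality holds at `x = x*`, reached by `α = 1/r`, where `min (rα) 1 = 1`.
-/

open Real

lemma one_add_mul_exp_sub_one_le_exp_mul {r : ℝ} (hr : 1 ≤ r) (y : ℝ) :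
    1 + r * (exp y - 1) ≤ exp (r * y) := by
  have h := one_add_mul_self_le_rpow_one_add (s := exp y - 1) (by linarith [exp_pos y]) hr
  rwa [add_sub_cancel, ← exp_mul, mul_comm y] at h

lemma exp_neg_mul_log_div_sub_one {r : ℝ} (hr : 1 < r) :
    exp (-r * log r / (r - 1)) = exp (-log r / (r - 1)) / r := by
  have hr1 : r - 1 ≠ 0 := by linarith
  rw [eq_div_iff (by linarith), ← exp_log (show 0 < r by linarith), ← exp_add, exp_log (by linarith)]
  congr 1
  field_simp
  ring

lemma exp_neg_sub_exp_neg_mul_le {r : ℝ} (hr : 1 < r) (x : ℝ) :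
    exp (-x) - exp (-(r * x)) ≤ exp (-log r / (r - 1)) - exp (-r * log r / (r - 1)) := by
  have hr0 : 0 < r := by linarith
  set A := exp (-log r / (r - 1))
  set y := log r / (r - 1) - x
  have h1 : exp (-x) = A * exp y := by
    rw [← exp_add]; congr 1; ring
  have h2 : exp (-(r * x)) = A / r * exp (r * y) := by
    rw [← exp_neg_mul_log_div_sub_one hr, ← exp_add]; congr 1; ring
  have hbern : exp y - exp (r * y) / r ≤ 1 - 1 / r := by
    have := one_add_mul_exp_sub_one_le_exp_mul hr.le y
    have hdiff : exp y - exp (r * y) / r - (1 - 1 / r) =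
        (1 + r * (exp y - 1) - exp (r * y)) / r := by
      field_simp; ring
    linarith [div_nonpos_of_nonpos_of_nonneg (sub_nonpos.2 this) hr0.le]
  calc exp (-x) - exp (-(r * x)) = A * (exp y - exp (r * y) / r) := by rw [h1, h2]; ring
    _ ≤ A * (1 - 1 / r) := by gcongr
    _ = A - exp (-r * log r / (r - 1)) := by rw [exp_neg_mul_log_div_sub_one hr]; ring

theorem max_caching_energy_reduction_general
    (K M : ℝ) (hM : 0 < M) (hMK : M < K)
    (r : ℝ) (hr : 1 < r) :
    let Z : ℝ → ℝ → ℝ := fun α l => (1 - M / K) * Real.exp (-α * l * (M / K))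
    let ΔZ : ℝ → ℝ → ℝ := fun α l => Z α l - Z (min (r * α) 1) l
    let V : ℝ := (1 - M / K) *
      (Real.exp (-Real.log r / (r - 1)) - Real.exp (-r * Real.log r / (r - 1)))
    IsGreatest {v : ℝ | ∃ α ∈ Set.Icc (0 : ℝ) 1, ∃ l : ℝ, 0 ≤ l ∧ v = ΔZ α l} V ∧
    ΔZ (1 / r) (r * Real.log r / ((r - 1) * (M / K))) = V := by
  intro Z ΔZ V
  have hK : 0 < K := hM.trans hMK
  have hm : 0 < M / K := div_pos hM hK
  have hc : 0 ≤ 1 - M / K := by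
    rw [sub_nonneg, div_le_one hK]
    exact hMK.le
  have hr0 : 0 < r := by linarith
  have hr1 : 0 < r - 1 := by linarith
  have hattain : ΔZ (1 / r) (r * log r / ((r - 1) * (M / K))) = V := by
    have e1 : -(1 / r) * (r * log r / ((r - 1) * (M / K))) * (M / K) = -log r / (r - 1) := by
      field_simp
    have e2 : -1 * (r * log r / ((r - 1) * (M / K))) * (M / K) = -r * log r / (r - 1) := by
      field_simp
    simp only [ΔZ, Z, V, mul_one_div_cancel hr0.ne', min_self, e1, e2, mul_sub]
  have hlog : 0 < log r := log_pos hr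
  refine ⟨⟨⟨1 / r, ⟨by positivity, by rw [div_le_one hr0]; linarith⟩,
    _, by positivity, hattain.symm⟩, ?_⟩, hattain⟩
  rintro v ⟨α, ⟨hα0, -⟩, l, hl, rfl⟩
  have hmin : exp (-(r * (α * l * (M / K)))) ≤ exp (-min (r * α) 1 * l * (M / K)) := by
    have := mul_le_mul_of_nonneg_right (min_le_left (r * α) 1) (by positivity : 0 ≤ l * (M / K))
    rw [exp_le_exp]
    linarith
  calc ΔZ α l = (1 - M / K) * (exp (-(α * l * (M / K))) - exp (-min (r * α) 1 * l * (M / K))) := by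
        simp only [ΔZ, Z, neg_mul, mul_sub]
    _ ≤ (1 - M / K) * (exp (-(α * l * (M / K))) - exp (-(r * (α * l * (M / K))))) := by gcongr
    _ ≤ V := mul_le_mul_of_nonneg_left (exp_neg_sub_exp_neg_mul_le hr _) hc

/-- The supremum of the caching energy reduction
`ΔZ(r, α, λ) = Z(α,λ) - Z(min(rα,1), λ)` with `Z(α,λ) = (1 - M/K) e^{-αλM/K}`
over `α ∈ [0,1]` and `λ ≥ 0` equals
`(1 - M/K)(e^{-ln r/(r-1)} - e^{-r ln r/(r-1)})`,
attained at `α = 1/r` and `λ = r ln r / ((r-1) M/K)`. -/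
theorem max_caching_energy_reduction
    (K M : ℝ) (hK : 1 ≤ K) (hM : 0 < M) (hMK : M < K)
    (r : ℝ) (hr : 1 < r) :
    let Z : ℝ → ℝ → ℝ := fun α l => (1 - M / K) * Real.exp (-α * l * (M / K))
    let ΔZ : ℝ → ℝ → ℝ := fun α l => Z α l - Z (min (r * α) 1) l
    let V : ℝ := (1 - M / K) *
      (Real.exp (-Real.log r / (r - 1)) - Real.exp (-r * Real.log r / (r - 1)))
    IsGreatest {v : ℝ | ∃ α ∈ Set.Icc (0 : ℝ) 1, ∃ l : ℝ, 0 ≤ l ∧ v = ΔZ α l} V ∧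
    ΔZ (1 / r) (r * Real.log r / ((r - 1) * (M / K))) = V :=
  max_caching_energy_reduction_general K M hM hMK r hr
end

section
/- The function h : (1, ∞) → ℝ defined by h(r) = r^{-1/(r-1)} · (1 - 1/r) satisfies lim_{r → 1⁺} h(r) = 0 and lim_{r → ∞} h(r) = 1, and h is strictly increasing on (1, ∞). -/
/-!
Since `0 ≤ r ^ (-1/(r-1)) ≤ 1` for `r ≥ 1`, `h r` is squeezed between `0` and `1 - 1/r` near `1⁺`;
at `∞` both factors tend to `1`. For monotonicity, `log h(r) = -log r/(r-1) + log (r-1) - log r`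
has derivative `log r / (r-1)^2 > 0` on `(1, ∞)`.
-/

open Real Filter Set Topology

noncomputable section

namespace NormalizedReduction

def h (r : ℝ) : ℝ := r ^ (-1 / (r - 1) : ℝ) * (1 - 1 / r)

def logH (r : ℝ) : ℝ := -log r / (r - 1) + log (r - 1) - log r

lemma one_sub_one_div_nonneg {r : ℝ} (hr : 1 ≤ r) : 0 ≤ 1 - 1 / r :=
  sub_nonneg.mpr ((div_le_one (by linarith)).mpr hr)

lemma h_nonneg {r : ℝ} (hr : 1 ≤ r) : 0 ≤ h r :=
  mul_nonneg (rpow_nonneg (by linarith) _) (one_sub_one_div_nonneg hr)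

lemma h_le_one_sub_one_div {r : ℝ} (hr : 1 ≤ r) : h r ≤ 1 - 1 / r := by
  have hpow : r ^ (-1 / (r - 1) : ℝ) ≤ 1 :=
    rpow_le_one_of_one_le_of_nonpos hr (div_nonpos_of_nonpos_of_nonneg (by norm_num) (by linarith))
  simpa [h] using mul_le_mul_of_nonneg_right hpow (one_sub_one_div_nonneg hr)

lemma tendsto_h_nhdsGT_one : Tendsto h (𝓝[>] 1) (𝓝 0) := by
  have hlim : Tendsto (fun r : ℝ => 1 - 1 / r) (𝓝[>] 1) (𝓝 0) := by
    have : Tendsto (fun r : ℝ => 1 - 1 / r) (𝓝 1) (𝓝 (1 - 1 / 1)) :=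
      tendsto_const_nhds.sub (tendsto_const_nhds.div tendsto_id one_ne_zero)
    simpa using this.mono_left nhdsWithin_le_nhds
  refine squeeze_zero' ?_ ?_ hlim <;> filter_upwards [self_mem_nhdsWithin] with r hr
  exacts [h_nonneg (le_of_lt hr), h_le_one_sub_one_div (le_of_lt hr)]

lemma tendsto_h_atTop : Tendsto h atTop (𝓝 1) := by
  have hpow : Tendsto (fun r : ℝ => r ^ (-1 / (r - 1) : ℝ)) atTop (𝓝 1) := by
    convert tendsto_rpow_div_mul_add (-1) 1 (-1) zero_ne_one using 4
    ring
  have hfac : Tendsto (fun r : ℝ => 1 - 1 / r) atTop (𝓝 1) := by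
    simpa [one_div] using tendsto_const_nhds.sub (tendsto_inv_atTop_zero (𝕜 := ℝ))
  exact (mul_one (1 : ℝ)) ▸ hpow.mul hfac

lemma exp_logH {r : ℝ} (hr : 1 < r) : exp (logH r) = h r := by
  have hr0 : 0 < r := by linarith
  rw [logH, h, rpow_def_of_pos hr0, exp_sub, exp_add, exp_log (by linarith), exp_log hr0]
  field_simp

lemma hasDerivAt_logH {r : ℝ} (hr : 1 < r) : HasDerivAt logH (log r / (r - 1) ^ 2) r := by
  have hr0 : r ≠ 0 := by positivity
  have hr1 : r - 1 ≠ 0 := by linarith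
  have hlog : HasDerivAt log r⁻¹ r := hasDerivAt_log hr0
  have hden : HasDerivAt (fun x : ℝ => x - 1) 1 r := (hasDerivAt_id r).sub_const 1
  refine (((hlog.neg.div hden hr1).add (hden.log hr1)).sub hlog).congr_deriv ?_
  rw [Pi.neg_apply]
  field_simp
  ring

lemma strictMonoOn_logH : StrictMonoOn logH (Ioi 1) := by
  apply strictMonoOn_of_deriv_pos (convex_Ioi 1)
  · exact fun x hx => (hasDerivAt_logH hx).continuousAt.continuousWithinAt
  · intro x hx
    rw [interior_Ioi] at hx
    rw [(hasDerivAt_logH hx).deriv]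
    exact div_pos (log_pos hx) (pow_pos (by linarith [mem_Ioi.mp hx]) 2)

lemma strictMonoOn_h : StrictMonoOn h (Ioi 1) := by
  intro x hx y hy hxy
  rw [← exp_logH hx, ← exp_logH hy]
  exact exp_lt_exp.mpr (strictMonoOn_logH hx hy hxy)

end NormalizedReduction

end

/-- The normalized maximum caching energy reduction `h(r) = r^{-1/(r-1)} (1 - 1/r)`
satisfies `h(r) → 0` as `r → 1⁺`, `h(r) → 1` as `r → ∞`, and is strictly increasing
on `(1, ∞)`. -/
theorem normalized_reduction_monotone_limits :
    let h : ℝ → ℝ := fun r => r ^ (-1 / (r - 1) : ℝ) * (1 - 1 / r)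
    Filter.Tendsto h (nhdsWithin 1 (Set.Ioi 1)) (nhds 0) ∧
    Filter.Tendsto h Filter.atTop (nhds 1) ∧
    StrictMonoOn h (Set.Ioi 1) :=
  ⟨NormalizedReduction.tendsto_h_nhdsGT_one, NormalizedReduction.tendsto_h_atTop,
    NormalizedReduction.strictMonoOn_h⟩
end

section
/- Fix 0 < a < b, a continuous nondecreasing F : [a,b] → [0,1] with F(a)=0, F(b)=1 and F(x) < 1 on a set of positive Lebesgue measure in (a,b). Let λ > 0, r > 1, and define D(α) = W(α, λ) - W(rα, λ) where W(α, λ) = 1/b + ∫_a^b e^{λ(F(x)-1)α} F(x)/x² dx. Then D'(0) = λ(r-1) ∫_a^b (1 - F(x)) F(x) / x² dx > 0; in particular D(α) > 0 for all sufficiently small α > 0. -/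
/-!
At `α = 0` every exponential weight equals `1`, so differentiating under the integral sign
gives `W'(0) = -λ ∫ (1 - F) F / x²` and hence `D'(0) = (1 - r) W'(0) = λ (r - 1) ∫ (1 - F) F / x²`.
The integrand is nonnegative and, by the intermediate value theorem, equals `1 / (4 c²)` at a
point `c` with `F c = 1 / 2`, so the integral is positive. Since `D 0 = 0`, a positive derivative at `0`
makes `D` positive just to the right of `0`.
-/

open MeasureTheory Set Filter Topology Real

theorem HasDerivAt.eventually_lt_of_deriv_pos {f : ℝ → ℝ} {f' x : ℝ}
    (hf : HasDerivAt f f' x) (hf' : 0 < f') : ∀ᶠ y in 𝓝[>] x, f x < f y := by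
  have hslope : Tendsto (slope f x) (𝓝[>] x) (𝓝 f') :=
    (hasDerivAt_iff_tendsto_slope.mp hf).mono_left
      (nhdsWithin_mono x fun _ hy => ne_of_gt hy)
  filter_upwards [hslope.eventually (lt_mem_nhds hf'), self_mem_nhdsWithin] with y hpos hxy
  rw [slope_def_field] at hpos
  exact sub_pos.mp ((div_pos_iff_of_pos_right (sub_pos.mpr hxy)).mp hpos)

theorem HasDerivAt.sub_comp_const_mul {f : ℝ → ℝ} {f' : ℝ} (hf : HasDerivAt f f' 0) (r : ℝ) :
    HasDerivAt (fun x => f x - f (r * x)) ((1 - r) * f') 0 := by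
  have hfr : HasDerivAt (fun x => f (r * x)) (f' * r) 0 := by
    have hf₀ : HasDerivAt f f' (r * 0) := by rwa [mul_zero]
    exact hf₀.comp 0 ((hasDerivAt_id 0).const_mul r |>.congr_deriv (mul_one r))
  exact (hf.sub hfr).congr_deriv (by ring)

theorem hasDerivAt_intervalIntegral_exp_mul {g h : ℝ → ℝ} {a b : ℝ}
    (hg : ContinuousOn g (uIcc a b)) (hh : ContinuousOn h (uIcc a b)) (t₀ : ℝ) :
    HasDerivAt (fun t => ∫ x in a..b, exp (g x * t) * h x)
      (∫ x in a..b, g x * exp (g x * t₀) * h x) t₀ := by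
  obtain ⟨G, hG⟩ := isCompact_uIcc.exists_bound_of_continuousOn hg
  obtain ⟨H, hH⟩ := isCompact_uIcc.exists_bound_of_continuousOn hh
  have hcont : ∀ t, ContinuousOn (fun x => exp (g x * t) * h x) (uIcc a b) := fun t =>
    ((hg.mul continuousOn_const).rexp).mul hh
  have hcont' : ContinuousOn (fun x => g x * exp (g x * t₀) * h x) (uIcc a b) :=
    hg.mul ((hg.mul continuousOn_const).rexp) |>.mul hh
  refine (intervalIntegral.hasDerivAt_integral_of_dominated_loc_of_deriv_le
    (F := fun t x => exp (g x * t) * h x) (F' := fun t x => g x * exp (g x * t) * h x)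
    (bound := fun _ => G * exp (G * (|t₀| + 1)) * H) (Metric.ball_mem_nhds t₀ one_pos)
    (Eventually.of_forall fun t => (hcont t).intervalIntegrable.def'.aestronglyMeasurable)
    (hcont t₀).intervalIntegrable hcont'.intervalIntegrable.def'.aestronglyMeasurable
    ?_ intervalIntegrable_const ?_).2
  · refine ae_of_all _ fun x hx t ht => ?_
    have hgx : ‖g x‖ ≤ G := hG x (uIoc_subset_uIcc hx)
    have hG₀ : 0 ≤ G := (norm_nonneg _).trans hgx
    have ht' : |t| ≤ |t₀| + 1 := by
      have := abs_sub_abs_le_abs_sub t t₀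
      rw [Metric.mem_ball, Real.dist_eq] at ht
      linarith
    have hexp : g x * t ≤ G * (|t₀| + 1) :=
      calc g x * t ≤ |g x| * |t| := (le_abs_self _).trans (abs_mul _ _).le
        _ ≤ G * (|t₀| + 1) := mul_le_mul hgx ht' (abs_nonneg _) hG₀
    rw [norm_mul, norm_mul, Real.norm_of_nonneg (exp_pos _).le]
    gcongr
    exact hH x (uIoc_subset_uIcc hx)
  · refine ae_of_all _ fun x _ t _ => ?_
    have := (((hasDerivAt_id t).const_mul (g x)).exp.mul_const (h x))
    exact this.congr_deriv (by simp only [id, mul_one]; ring)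

theorem integral_one_sub_mul_div_sq_pos {a b : ℝ} (ha : 0 < a) (hab : a < b) {F : ℝ → ℝ}
    (hFcont : ContinuousOn F (Icc a b)) (hFrange : ∀ x ∈ Icc a b, F x ∈ Icc (0 : ℝ) 1)
    (hFa : F a = 0) (hFb : F b = 1) :
    0 < ∫ x in a..b, (1 - F x) * F x / x ^ 2 := by
  have hx₀ : ∀ x ∈ Icc a b, x ≠ 0 := fun x hx => (ha.trans_le hx.1).ne'
  obtain ⟨c, hc, hFc⟩ : ∃ c ∈ Icc a b, F c = 1 / 2 :=
    intermediate_value_Icc hab.le hFcont (by rw [hFa, hFb]; norm_num)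
  refine intervalIntegral.integral_pos hab
    (((continuousOn_const.sub hFcont).mul hFcont).div (continuousOn_pow 2)
      fun x hx => pow_ne_zero 2 (hx₀ x hx)) (fun x hx => ?_) ⟨c, hc, ?_⟩
  · obtain ⟨hF₀, hF₁⟩ := hFrange x (Ioc_subset_Icc_self hx)
    exact div_nonneg (mul_nonneg (sub_nonneg.mpr hF₁) hF₀) (sq_nonneg x)
  · rw [hFc]
    exact div_pos (by norm_num) (pow_pos (ha.trans_le hc.1) 2)

theorem energy_reduction_positive_near_zero_general
    (a b : ℝ) (ha : 0 < a) (hab : a < b)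
    (F : ℝ → ℝ) (hFcont : ContinuousOn F (Set.Icc a b))
    (hFrange : ∀ x ∈ Set.Icc a b, F x ∈ Set.Icc (0 : ℝ) 1)
    (hFa : F a = 0) (hFb : F b = 1)
    (l r : ℝ) (hl : 0 < l) (hr : 1 < r) :
    let W : ℝ → ℝ := fun α => 1 / b + ∫ x in a..b, Real.exp (l * (F x - 1) * α) * F x / x ^ 2
    let D : ℝ → ℝ := fun α => W α - W (r * α)
    HasDerivAt D (l * (r - 1) * ∫ x in a..b, (1 - F x) * F x / x ^ 2) 0 ∧
    0 < l * (r - 1) * ∫ x in a..b, (1 - F x) * F x / x ^ 2 ∧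
    ∃ ε > 0, ∀ α : ℝ, 0 < α → α < ε → 0 < D α := by
  intro W D
  set K := ∫ x in a..b, (1 - F x) * F x / x ^ 2
  have hFcont' : ContinuousOn F (uIcc a b) := by rwa [uIcc_of_le hab.le]
  have hg : ContinuousOn (fun x => l * (F x - 1)) (uIcc a b) :=
    continuousOn_const.mul (hFcont'.sub continuousOn_const)
  have hh : ContinuousOn (fun x => F x / x ^ 2) (uIcc a b) :=
    hFcont'.div (continuousOn_pow 2) fun x hx =>
      pow_ne_zero 2 (ha.trans_le (uIcc_of_le hab.le ▸ hx).1).ne'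
  have hI : HasDerivAt (fun α => ∫ x in a..b, exp (l * (F x - 1) * α) * F x / x ^ 2)
      (-l * K) 0 := by
    simp_rw [mul_div_assoc]
    convert hasDerivAt_intervalIntegral_exp_mul hg hh 0 using 1
    rw [← intervalIntegral.integral_const_mul]
    refine intervalIntegral.integral_congr fun x _ => ?_
    simp only [mul_zero, exp_zero, mul_one]
    ring
  have hD : HasDerivAt D (l * (r - 1) * K) 0 :=
    ((hI.const_add (1 / b)).sub_comp_const_mul r).congr_deriv (by ring)
  have hD' : 0 < l * (r - 1) * K := mul_pos (mul_pos hl (sub_pos.mpr hr))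
    (integral_one_sub_mul_div_sq_pos ha hab hFcont hFrange hFa hFb)
  have hD₀ : D 0 = 0 := by simp only [D, mul_zero, sub_self]
  obtain ⟨ε, hε, hDpos⟩ :=
    mem_nhdsGT_iff_exists_Ioo_subset.mp (hD.eventually_lt_of_deriv_pos hD')
  exact ⟨hD, hD', ε, hε, fun α hα hαε => hD₀ ▸ hDpos ⟨hα, hαε⟩⟩

/-- The derivative at `0` of the energy reduction `D(α) = W(α,λ) - W(rα,λ)` equals
`λ(r-1) ∫_a^b (1 - F(x)) F(x)/x² dx > 0`; in particular `D(α) > 0` for all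
sufficiently small `α > 0`. -/
theorem energy_reduction_positive_near_zero
    (a b : ℝ) (ha : 0 < a) (hab : a < b)
    (F : ℝ → ℝ) (hFcont : ContinuousOn F (Set.Icc a b))
    (hFmono : MonotoneOn F (Set.Icc a b))
    (hFrange : ∀ x ∈ Set.Icc a b, F x ∈ Set.Icc (0 : ℝ) 1)
    (hFa : F a = 0) (hFb : F b = 1)
    (hpos : 0 < volume {x ∈ Set.Ioo a b | F x < 1})
    (l r : ℝ) (hl : 0 < l) (hr : 1 < r) :
    let W : ℝ → ℝ := fun α => 1 / b + ∫ x in a..b, Real.exp (l * (F x - 1) * α) * F x / x ^ 2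
    let D : ℝ → ℝ := fun α => W α - W (r * α)
    HasDerivAt D (l * (r - 1) * ∫ x in a..b, (1 - F x) * F x / x ^ 2) 0 ∧
    0 < l * (r - 1) * ∫ x in a..b, (1 - F x) * F x / x ^ 2 ∧
    ∃ ε > 0, ∀ α : ℝ, 0 < α → α < ε → 0 < D α :=
  energy_reduction_positive_near_zero_general a b ha hab F hFcont hFrange hFa hFb l r hl hr
end

section
/- Let K ≥ 1, 0 < M < K, λ ≥ 0, r > 1, and define ΔZ(α) = (1 - M/K)(e^{-αλM/K} - e^{-rαλM/K}) for α ∈ [0, 1/r]. If λ > r ln r/((r-1)M/K), then ΔZ attains its maximum on [0, 1/r] at the interior point α̃ = ln r/((r-1)·λ·M/K) < 1/r; if λ ≤ r ln r/((r-1)M/K), then ΔZ is nondecreasing on [0, 1/r] and attains its maximum at α = 1/r. -/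
/-!
With `c = λM/K`, `ΔZ` is a nonnegative multiple of `e^{-cα} - e^{-rcα}`, whose derivative
`c e^{-cα} (e^{ln r - (r-1)cα} - 1)` changes sign only at `α̃ = ln r/((r-1)c)`. So `ΔZ` increases
up to `α̃` and decreases after it, and the threshold on `λ` says whether `α̃` lies below `1/r`.
-/

open Real Set

noncomputable section

def expGap (c r α : ℝ) : ℝ := exp (-(c * α)) - exp (-(r * c * α))

variable {c r : ℝ}

lemma hasDerivAt_expGap (c : ℝ) (hr : 0 < r) (x : ℝ) :
    HasDerivAt (expGap c r) (c * exp (-(c * x)) * (exp (log r - (r - 1) * c * x) - 1)) x := by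
  have h : HasDerivAt (expGap c r)
      (exp (-(c * x)) * -(c * 1) - exp (-(r * c * x)) * -(r * c * 1)) x :=
    (((hasDerivAt_id' x).const_mul c).neg.exp).sub (((hasDerivAt_id' x).const_mul (r * c)).neg.exp)
  convert h using 1
  have : exp (log r - (r - 1) * c * x) * exp (-(c * x)) = r * exp (-(r * c * x)) := by
    rw [← exp_add, show log r - (r - 1) * c * x + -(c * x) = log r + -(r * c * x) by ring,
      exp_add, exp_log hr]
  linear_combination c * this

lemma monotoneOn_expGap {a : ℝ} (hc : 0 ≤ c) (hr : 1 ≤ r) (ha : (r - 1) * c * a ≤ log r) :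
    MonotoneOn (expGap c r) (Iic a) := by
  have hr₀ : 0 < r := by linarith
  refine monotoneOn_of_hasDerivWithinAt_nonneg (convex_Iic a)
    (fun x _ ↦ (hasDerivAt_expGap c hr₀ x).continuousAt.continuousWithinAt)
    (fun x _ ↦ (hasDerivAt_expGap c hr₀ x).hasDerivWithinAt) fun x hx ↦ ?_
  rw [interior_Iic] at hx
  have hx' : (r - 1) * c * x ≤ log r :=
    (mul_le_mul_of_nonneg_left hx.le (mul_nonneg (by linarith) hc)).trans ha
  exact mul_nonneg (mul_nonneg hc (exp_pos _).le) (sub_nonneg.2 (one_le_exp (by linarith)))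

lemma antitoneOn_expGap {a : ℝ} (hc : 0 ≤ c) (hr : 1 ≤ r) (ha : log r ≤ (r - 1) * c * a) :
    AntitoneOn (expGap c r) (Ici a) := by
  have hr₀ : 0 < r := by linarith
  refine antitoneOn_of_hasDerivWithinAt_nonpos (convex_Ici a)
    (fun x _ ↦ (hasDerivAt_expGap c hr₀ x).continuousAt.continuousWithinAt)
    (fun x _ ↦ (hasDerivAt_expGap c hr₀ x).hasDerivWithinAt) fun x hx ↦ ?_
  rw [interior_Ici] at hx
  have hx' : log r ≤ (r - 1) * c * x :=
    ha.trans (mul_le_mul_of_nonneg_left hx.le (mul_nonneg (by linarith) hc))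
  exact mul_nonpos_of_nonneg_of_nonpos (mul_nonneg hc (exp_pos _).le)
    (sub_nonpos.2 (exp_le_one_iff.2 (by linarith)))

lemma isMaxOn_expGap (hc : 0 < c) (hr : 1 < r) (s : Set ℝ) :
    IsMaxOn (expGap c r) s (log r / ((r - 1) * c)) := by
  have hrc : (r - 1) * c * (log r / ((r - 1) * c)) = log r :=
    mul_div_cancel₀ _ (mul_pos (by linarith) hc).ne'
  exact (isMaxOn_univ_of_mono_anti (monotoneOn_expGap hc.le hr.le hrc.le)
    (antitoneOn_expGap hc.le hr.le hrc.ge)).on_subset (subset_univ s)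

end

theorem caching_reduction_maximizer_general
    (K M : ℝ) (hM : 0 < M) (hMK : M < K)
    (l : ℝ) (hl : 0 ≤ l) (r : ℝ) (hr : 1 < r) :
    let ΔZ : ℝ → ℝ := fun α =>
      (1 - M / K) * (Real.exp (-α * l * (M / K)) - Real.exp (-r * α * l * (M / K)))
    ((r * Real.log r / ((r - 1) * (M / K)) < l →
        (Real.log r / ((r - 1) * l * (M / K)) < 1 / r ∧
         IsMaxOn ΔZ (Set.Icc 0 (1 / r)) (Real.log r / ((r - 1) * l * (M / K))))) ∧
     (l ≤ r * Real.log r / ((r - 1) * (M / K)) →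
        (MonotoneOn ΔZ (Set.Icc 0 (1 / r)) ∧
         IsMaxOn ΔZ (Set.Icc 0 (1 / r)) (1 / r)))) := by
  intro ΔZ
  have hK : 0 < K := hM.trans hMK
  have hr₁ : 0 < (r - 1) * (M / K) := mul_pos (by linarith) (div_pos hM hK)
  set c := l * (M / K) with hc
  have hΔZ : ΔZ = fun α ↦ (1 - M / K) * expGap c r α := by
    funext α; simp only [ΔZ, expGap, hc]; ring_nf
  have hscale : Monotone fun y ↦ (1 - M / K) * y :=
    monotone_mul_left_of_nonneg (sub_nonneg.2 ((div_le_one hK).2 hMK.le))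
  rw [hΔZ, show (r - 1) * l * (M / K) = (r - 1) * c by ring]
  refine ⟨fun hbig ↦ ?_, fun hsmall ↦ ?_⟩
  · rw [div_lt_iff₀ hr₁] at hbig
    have hrc : r * log r < (r - 1) * c := by linarith
    have hc₀ : 0 < c :=
      pos_of_mul_pos_right ((mul_pos (by linarith) (log_pos hr)).trans hrc) (by linarith)
    refine ⟨?_, (isMaxOn_expGap hc₀ hr _).comp_mono hscale⟩
    rw [div_lt_div_iff₀ (mul_pos (by linarith) hc₀) (by linarith)]
    linarith
  · rw [le_div_iff₀ hr₁] at hsmall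
    have hrc : (r - 1) * c * (1 / r) ≤ log r := by
      rw [mul_one_div, div_le_iff₀ (by linarith)]
      linarith
    have hmono : MonotoneOn (fun α ↦ (1 - M / K) * expGap c r α) (Icc 0 (1 / r)) :=
      hscale.comp_monotoneOn
        ((monotoneOn_expGap (mul_nonneg hl (div_pos hM hK).le) hr.le hrc).mono Icc_subset_Iic_self)
    exact ⟨hmono, fun x hx ↦ hmono hx (right_mem_Icc.2 (by positivity)) hx.2⟩

/-- The caching energy reduction `ΔZ(α) = (1 - M/K)(e^{-αλM/K} - e^{-rαλM/K})` on
`[0, 1/r]` is maximized at the interior point `α̃ = ln r/((r-1)λM/K) < 1/r` when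
`λ > r ln r/((r-1)M/K)`, and is nondecreasing with maximum at `α = 1/r` when
`λ ≤ r ln r/((r-1)M/K)`. -/
theorem caching_reduction_maximizer
    (K M : ℝ) (hK : 1 ≤ K) (hM : 0 < M) (hMK : M < K)
    (l : ℝ) (hl : 0 ≤ l) (r : ℝ) (hr : 1 < r) :
    let ΔZ : ℝ → ℝ := fun α =>
      (1 - M / K) * (Real.exp (-α * l * (M / K)) - Real.exp (-r * α * l * (M / K)))
    ((r * Real.log r / ((r - 1) * (M / K)) < l →
        (Real.log r / ((r - 1) * l * (M / K)) < 1 / r ∧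
         IsMaxOn ΔZ (Set.Icc 0 (1 / r)) (Real.log r / ((r - 1) * l * (M / K))))) ∧
     (l ≤ r * Real.log r / ((r - 1) * (M / K)) →
        (MonotoneOn ΔZ (Set.Icc 0 (1 / r)) ∧
         IsMaxOn ΔZ (Set.Icc 0 (1 / r)) (1 / r)))) :=
  caching_reduction_maximizer_general K M hM hMK l hl r hr
end
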